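/- arXiv:1502.05453 — 2 statements merged into one kernel-verified Lean document; each statement's English description precedes it below -/
import Mathlib

section
/- Let p, q ≥ 2 be integers, c = cos(π/p)cos(π/q), s = sin(π/p)sin(π/q). Then for every t ∈ [0,1] and every real number x with −4s² ≤ x ≤ 0, one has |Ω_{p,q}(t) − x| ≤ 4(1 + cos(π/p)cos(π/q))². -/
/-!
Write a = 1 + t c, u = t², S = s². Then |Ω(t)| = 4(a² − uS), and more generally
|Ω(t) − x|² is a monic quadratic in x. Being convex, it is maximal at an endpoint of [−4S, 0],
and by the symmetry u ↔ 1 − u its value at −4S is 16(a² − (1 − u)S)². Both endpoint values are at most 16a⁴ ≤ 16(1 + c)⁴, since S ≤ 1 ≤ a.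
-/

open scoped Real

/-- The contour point Ω_{p,q}(t). -/
noncomputable def Omega (p q : ℕ) (t : ℝ) : ℂ :=
  ((4 * (2 * t ^ 2 - 1) * (1 + t * (Real.cos (π / p) * Real.cos (π / q))) ^ 2
      - 4 * t ^ 2 * (Real.sin (π / p) * Real.sin (π / q)) ^ 2 : ℝ) : ℂ)
  - ((8 * t * Real.sqrt (1 - t ^ 2) * (1 + t * (Real.cos (π / p) * Real.cos (π / q)))
      * Real.sqrt ((1 + t * (Real.cos (π / p) * Real.cos (π / q))) ^ 2
        - (Real.sin (π / p) * Real.sin (π / q)) ^ 2) : ℝ) : ℂ) * Complex.I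

open Real

noncomputable def contourPoint (c s t : ℝ) : ℂ :=
  ((4 * (2 * t ^ 2 - 1) * (1 + t * c) ^ 2 - 4 * t ^ 2 * s ^ 2 : ℝ) : ℂ)
  - ((8 * t * √(1 - t ^ 2) * (1 + t * c) * √((1 + t * c) ^ 2 - s ^ 2) : ℝ) : ℂ) * Complex.I

lemma Omega_eq_contourPoint (p q : ℕ) (t : ℝ) :
    Omega p q t = contourPoint (cos (π / p) * cos (π / q)) (sin (π / p) * sin (π / q)) t :=
  rfl

lemma quadratic_le_of_mem_Icc {b k M l h y : ℝ} (hly : l ≤ y) (hyh : y ≤ h)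
    (hl : l ^ 2 + b * l + k ≤ M) (hh : h ^ 2 + b * h + k ≤ M) :
    y ^ 2 + b * y + k ≤ M := by
  rcases hly.eq_or_lt with rfl | hly
  · exact hl
  · nlinarith [mul_nonneg (sub_nonneg.2 hly.le) (sub_nonneg.2 hyh)]

lemma sq_sub_le_sq_of_le {z w : ℝ} (hz : 0 ≤ z) (hzw : z ≤ w) : (w - z) ^ 2 ≤ w ^ 2 :=
  pow_le_pow_left₀ (sub_nonneg.2 hzw) (sub_le_self w hz) 2

lemma norm_contourPoint_sub_sq {c s t : ℝ} (ht : t ^ 2 ≤ 1) (hs : s ^ 2 ≤ (1 + t * c) ^ 2)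
    (x : ℝ) :
    ‖contourPoint c s t - x‖ ^ 2 =
      x ^ 2 + (-8 * ((2 * t ^ 2 - 1) * (1 + t * c) ^ 2 - t ^ 2 * s ^ 2)) * x
        + 16 * ((1 + t * c) ^ 2 - t ^ 2 * s ^ 2) ^ 2 := by
  have hre_im : contourPoint c s t - x =
      ((4 * (2 * t ^ 2 - 1) * (1 + t * c) ^ 2 - 4 * t ^ 2 * s ^ 2 - x : ℝ) : ℂ)
        + ((-(8 * t * √(1 - t ^ 2) * (1 + t * c) * √((1 + t * c) ^ 2 - s ^ 2)) : ℝ) : ℂ)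
          * Complex.I := by
    simp only [contourPoint]
    push_cast
    ring
  rw [Complex.sq_norm, hre_im, Complex.normSq_add_mul_I, neg_sq, mul_pow, mul_pow, mul_pow,
    sq_sqrt (sub_nonneg.2 ht), sq_sqrt (sub_nonneg.2 hs)]
  ring

lemma norm_contourPoint_sub_le {c s t x : ℝ} (hc : 0 ≤ c) (hs : s ^ 2 ≤ 1)
    (ht : t ∈ Set.Icc (0 : ℝ) 1) (hx₁ : -(4 * s ^ 2) ≤ x) (hx₂ : x ≤ 0) :
    ‖contourPoint c s t - x‖ ≤ 4 * (1 + c) ^ 2 := by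
  obtain ⟨ht₀, ht₁⟩ := ht
  set a := 1 + t * c
  have ha₁ : 1 ≤ a := le_add_of_nonneg_right (mul_nonneg ht₀ hc)
  have ha : a ^ 2 ≤ (1 + c) ^ 2 :=
    pow_le_pow_left₀ (by linarith) (by nlinarith) 2
  have hu₁ : t ^ 2 ≤ 1 := pow_le_one₀ ht₀ ht₁
  have hsa : s ^ 2 ≤ a ^ 2 := hs.trans (one_le_pow₀ ha₁)
  have endpoint_le {v : ℝ} (hv₀ : 0 ≤ v) (hv₁ : v ≤ 1) :
      16 * (a ^ 2 - v * s ^ 2) ^ 2 ≤ (4 * (1 + c) ^ 2) ^ 2 := by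
    have := sq_sub_le_sq_of_le (mul_nonneg hv₀ (sq_nonneg s)) (by nlinarith : v * s ^ 2 ≤ a ^ 2)
    nlinarith [pow_le_pow_left₀ (sq_nonneg a) ha 2]
  rw [← pow_le_pow_iff_left₀ (norm_nonneg _) (by positivity) two_ne_zero,
    norm_contourPoint_sub_sq hu₁ hsa]
  refine quadratic_le_of_mem_Icc hx₁ hx₂ ?_ ?_
  · calc _ = 16 * (a ^ 2 - (1 - t ^ 2) * s ^ 2) ^ 2 := by ring
      _ ≤ _ := endpoint_le (sub_nonneg.2 hu₁) (sub_le_self 1 (sq_nonneg t))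
  · calc _ = 16 * (a ^ 2 - t ^ 2 * s ^ 2) ^ 2 := by ring
      _ ≤ _ := endpoint_le (sq_nonneg t) hu₁

lemma cos_pi_div_natCast_nonneg {n : ℕ} (hn : 2 ≤ n) : 0 ≤ cos (π / n) := by
  have hn' : (2 : ℝ) ≤ n := by exact_mod_cast hn
  refine cos_nonneg_of_mem_Icc ⟨?_, div_le_div_of_nonneg_left pi_pos.le two_pos hn'⟩
  linarith [div_nonneg pi_pos.le (Nat.cast_nonneg (α := ℝ) n), pi_pos]

lemma sq_sin_mul_sin_le_one (α β : ℝ) : (sin α * sin β) ^ 2 ≤ 1 := by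
  rw [mul_pow]
  exact mul_le_one₀ (sin_sq_le_one α) (sq_nonneg _) (sin_sq_le_one β)

/-- For p, q ≥ 2, s = sin(π/p)sin(π/q), every t ∈ [0,1] and every real x with
−4s² ≤ x ≤ 0, one has |Ω_{p,q}(t) − x| ≤ 4(1 + cos(π/p)cos(π/q))². -/
theorem stmt_6 (p q : ℕ) (hp : 2 ≤ p) (hq : 2 ≤ q)
    (t : ℝ) (ht : t ∈ Set.Icc (0 : ℝ) 1)
    (x : ℝ) (hx₁ : -(4 * (Real.sin (π / p) * Real.sin (π / q)) ^ 2) ≤ x) (hx₂ : x ≤ 0) :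
    ‖Omega p q t - (x : ℂ)‖ ≤
      4 * (1 + Real.cos (π / p) * Real.cos (π / q)) ^ 2 := by
  rw [Omega_eq_contourPoint]
  exact norm_contourPoint_sub_le
    (mul_nonneg (cos_pi_div_natCast_nonneg hp) (cos_pi_div_natCast_nonneg hq))
    (sq_sin_mul_sin_le_one _ _) ht hx₁ hx₂
end

section
/- Let p, q ≥ 3 be integers and L = ℚ(cos(2π/p), cos(2π/q)) ⊆ ℝ. Let γ ∈ ℂ∖ℝ be an algebraic integer such that the field K = ℚ(γ) ⊆ ℂ contains L, with [K : L] = r; assume every field embedding K → ℂ other than the inclusion K ⊆ ℂ and its complex conjugate has image contained in ℝ; assume |γ| ≤ 4(cos(π/p) + cos(π/q))²; and assume every field embedding τ : K → ℝ satisfies −τ(β₁β₂)/4 < τ(γ) < 0, where β₁β₂ = 16 sin²(π/p) sin²(π/q) is viewed as an element of L ⊆ K. Then 1 ≤ |N_{K/ℚ}(γ)| ≤ 16(cos(π/p) + cos(π/q))⁴ · (4 sin²(π/p) sin²(π/q))⁻² · ∏_σ (σ(β₁β₂)/4)^r, the product being over all field embeddings σ : L → ℝ. -/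
/-!
Write `β = β₁β₂/4`. The norm of `γ` is the product of its images under the embeddings of `K`
into `ℂ`. The inclusion and its conjugate each contribute `|γ| ≤ 4(cos(π/p) + cos(π/q))²`, and every
other embedding `τ` is real with `|τ γ| < τ β`. The same factorisation of `N_{K/ℚ}(β)` has the
two complex factors `β₁β₂/4 = 4 sin²(π/p) sin²(π/q)`, which gives the upper bound once
`N_{K/ℚ}(β) = N_{L/ℚ}(β)^r = ∏_σ σ(β)^r` is known. That last product runs over the real
embeddings of `L` because `L` is totally real: each embedding of `L` extends to `K`, where it is
real or restricts to the inclusion `L ⊆ ℝ`. The lower bound holds since `N_{K/ℚ}(γ)` is a nonzero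
integer.
-/

open scoped Real
open NumberField Module

theorem Algebra.norm_algebraMap_eq_pow_finrank {F L K : Type*} [Field F] [Field L] [Field K]
    [Algebra F L] [Algebra F K] [Algebra L K] [IsScalarTower F L K] (y : L) :
    Algebra.norm F (algebraMap L K y) = Algebra.norm F y ^ finrank L K := by
  rw [← Algebra.norm_norm (S := L), Algebra.norm_algebraMap, map_pow]

theorem IntermediateField.im_eq_zero_of_mem_adjoin {S : Set ℂ} (hS : ∀ z ∈ S, z.im = 0) {x : ℂ}
    (hx : x ∈ IntermediateField.adjoin ℚ S) : x.im = 0 := by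
  have hle : IntermediateField.adjoin ℚ S ≤ Complex.ofRealHom.toRatAlgHom.fieldRange :=
    IntermediateField.adjoin_le_iff.mpr fun z hz => ⟨z.re, Complex.ext rfl (hS z hz).symm⟩
  obtain ⟨y, rfl⟩ := hle hx
  exact Complex.ofReal_im y

theorem Real.sin_pi_div_natCast_pos {n : ℕ} (hn : 1 < n) : 0 < Real.sin (π / n) :=
  Real.sin_pos_of_pos_of_lt_pi (by positivity) (div_lt_self Real.pi_pos (by exact_mod_cast hn))

namespace NumberField

variable {K : Type*} [Field K]

theorem one_le_abs_norm_of_isIntegral [Algebra ℚ K] [FiniteDimensional ℚ K] {x : K}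
    (hx : IsIntegral ℤ x) (hx0 : x ≠ 0) : 1 ≤ |Algebra.norm ℚ x| := by
  obtain ⟨m, hm⟩ := IsIntegrallyClosed.isIntegral_iff.mp (Algebra.isIntegral_norm ℚ hx)
  have hm0 : m ≠ 0 := by
    rintro rfl
    exact hx0 (by simpa using hm.symm)
  rw [← hm, algebraMap_int_eq, eq_intCast, ← Int.cast_abs]
  exact_mod_cast Int.one_le_abs hm0

theorem ratCast_norm_eq_prod_ringHom [NumberField K] (x : K) :
    ((Algebra.norm ℚ x : ℚ) : ℂ) = ∏ φ : K →+* ℂ, φ x := by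
  rw [← eq_ratCast (algebraMap ℚ ℂ), Algebra.norm_eq_prod_embeddings ℚ ℂ x]
  exact Fintype.prod_equiv (RingHom.equivRatAlgHom K ℂ).symm _ _ fun _ => rfl

theorem ComplexEmbedding.isReal_iff_forall_im_eq_zero {φ : K →+* ℂ} :
    ComplexEmbedding.IsReal φ ↔ ∀ x, (φ x).im = 0 := by
  simp only [ComplexEmbedding.isReal_iff, RingHom.ext_iff, ComplexEmbedding.conjugate_coe_eq,
    Complex.conj_eq_iff_im]

theorem IsTotallyReal.of_isReal_comp_algebraMap {F : Type*} [Field F] [Algebra F K]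
    [Algebra.IsAlgebraic F K]
    (h : ∀ φ : K →+* ℂ, ComplexEmbedding.IsReal (φ.comp (algebraMap F K))) : IsTotallyReal F :=
  ⟨fun w => InfinitePlace.isReal_iff.mpr (by
    simpa using h (ComplexEmbedding.lift K w.embedding))⟩

theorem IsTotallyReal.ratCast_norm_eq_finprod [NumberField K] [IsTotallyReal K] (x : K) :
    ((Algebra.norm ℚ x : ℚ) : ℝ) = ∏ᶠ τ : K →+* ℝ, τ x := by
  apply Complex.ofReal_injective
  rw [finprod_eq_prod_of_fintype, Complex.ofReal_prod, Complex.ofReal_ratCast,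
    ratCast_norm_eq_prod_ringHom]
  refine (Fintype.prod_bijective (Complex.ofRealHom.comp ·) ⟨?_, fun φ => ?_⟩ _ _
    fun _ => rfl).symm
  · exact fun τ τ' h => RingHom.ext fun x => Complex.ofReal_injective (RingHom.congr_fun h x)
  · exact ⟨(IsTotallyReal.complexEmbedding_isReal φ).embedding,
      RingHom.ext fun x => ComplexEmbedding.IsReal.coe_embedding_apply _ x⟩

theorem pos_of_forall_re_pos_algebraMap {F : Type*} [Field F] [Algebra F K]
    [Algebra.IsAlgebraic F K] {y : F} (h : ∀ φ : K →+* ℂ, 0 < (φ (algebraMap F K y)).re)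
    (τ : F →+* ℝ) : 0 < τ y := by
  simpa using h (ComplexEmbedding.lift K (Complex.ofRealHom.comp τ))

theorem ratCast_norm_algebraMap_eq_finprod {L : Type*} [Field L] [NumberField L] [IsTotallyReal L]
    [Algebra L K] [Algebra ℚ K] [IsScalarTower ℚ L K] (y : L) :
    ((Algebra.norm ℚ (algebraMap L K y) : ℚ) : ℝ) = ∏ᶠ τ : L →+* ℝ, τ y ^ finrank L K := by
  rw [Algebra.norm_algebraMap_eq_pow_finrank, Rat.cast_pow, IsTotallyReal.ratCast_norm_eq_finprod,
    finprod_pow (Set.toFinite _)]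

theorem abs_norm_mul_le_of_norm_apply_le [NumberField K] {x y : K} {φ₁ φ₂ : K →+* ℂ}
    (hne : φ₁ ≠ φ₂) (h : ∀ φ, φ ≠ φ₁ → φ ≠ φ₂ → ‖φ x‖ ≤ ‖φ y‖) :
    |(Algebra.norm ℚ x : ℝ)| * (‖φ₁ y‖ * ‖φ₂ y‖) ≤ ‖φ₁ x‖ * ‖φ₂ x‖ * |(Algebra.norm ℚ y : ℝ)| := by
  classical
  have split (z : K) :
      |(Algebra.norm ℚ z : ℝ)| = ‖φ₁ z‖ * ‖φ₂ z‖ * ∏ φ ∈ {φ₁, φ₂}ᶜ, ‖φ z‖ := by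
    rw [← Complex.norm_ratCast, ratCast_norm_eq_prod_ringHom, norm_prod,
      ← Finset.prod_mul_prod_compl {φ₁, φ₂}, Finset.prod_pair hne]
  rw [split x, split y]
  calc _ = ‖φ₁ x‖ * ‖φ₂ x‖ * (‖φ₁ y‖ * ‖φ₂ y‖ * ∏ φ ∈ {φ₁, φ₂}ᶜ, ‖φ x‖) := by ring
    _ ≤ ‖φ₁ x‖ * ‖φ₂ x‖ * (‖φ₁ y‖ * ‖φ₂ y‖ * ∏ φ ∈ {φ₁, φ₂}ᶜ, ‖φ y‖) := by
      gcongr with φ hφ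
      simp only [Finset.mem_compl, Finset.mem_insert, Finset.mem_singleton, not_or] at hφ
      exact h φ hφ.1 hφ.2
    _ = _ := by ring

end NumberField

def IntermediateField.NonRealEmbeddingsAreIdOrConj (K : IntermediateField ℚ ℂ) : Prop :=
  ∀ φ : K →+* ℂ, φ ≠ algebraMap K ℂ → φ ≠ (starRingEnd ℂ).comp (algebraMap K ℂ) →
    ∀ x : K, (φ x).im = 0

namespace IntermediateField.NonRealEmbeddingsAreIdOrConj

variable {K : IntermediateField ℚ ℂ}

theorem im_apply_eq_zero (hK : K.NonRealEmbeddingsAreIdOrConj) (φ : K →+* ℂ) {x : K}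
    (hx : (x : ℂ).im = 0) : (φ x).im = 0 := by
  by_cases h₁ : φ = algebraMap K ℂ
  · exact h₁ ▸ hx
  by_cases h₂ : φ = (starRingEnd ℂ).comp (algebraMap K ℂ)
  · simpa [h₂] using hx
  exact hK φ h₁ h₂ x

theorem re_apply_pos (hK : K.NonRealEmbeddingsAreIdOrConj) {b : K} (hb : 0 < (b : ℂ).re)
    (hτ : ∀ τ : K →+* ℝ, 0 < τ b) (φ : K →+* ℂ) : 0 < (φ b).re := by
  by_cases h₁ : φ = algebraMap K ℂ
  · exact h₁ ▸ hb
  by_cases h₂ : φ = (starRingEnd ℂ).comp (algebraMap K ℂ)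
  · simpa [h₂] using hb
  have hφ := ComplexEmbedding.isReal_iff_forall_im_eq_zero.mpr (hK φ h₁ h₂)
  have := hτ hφ.embedding
  rwa [← Complex.ofReal_re (hφ.embedding b), hφ.coe_embedding_apply] at this

theorem norm_apply_le_norm_apply_div_four (hK : K.NonRealEmbeddingsAreIdOrConj) {g b : K}
    (hτ : ∀ τ : K →+* ℝ, -(τ b) / 4 < τ g ∧ τ g < 0) (φ : K →+* ℂ)
    (h₁ : φ ≠ algebraMap K ℂ) (h₂ : φ ≠ (starRingEnd ℂ).comp (algebraMap K ℂ)) :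
    ‖φ g‖ ≤ ‖φ (b / 4)‖ := by
  have hφ := ComplexEmbedding.isReal_iff_forall_im_eq_zero.mpr (hK φ h₁ h₂)
  obtain ⟨hlo, hhi⟩ := hτ hφ.embedding
  rw [← hφ.coe_embedding_apply, ← hφ.coe_embedding_apply, Complex.norm_real, Complex.norm_real,
    map_div₀, map_ofNat, Real.norm_eq_abs, Real.norm_eq_abs, abs_of_neg hhi]
  linarith [le_abs_self (hφ.embedding b / 4)]

theorem abs_norm_mul_sq_le (hK : K.NonRealEmbeddingsAreIdOrConj) [NumberField K] {g b : K}
    (hg : (g : ℂ).im ≠ 0) (hτ : ∀ τ : K →+* ℝ, -(τ b) / 4 < τ g ∧ τ g < 0) {s : ℝ} (hs : 0 ≤ s)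
    (hb : ((b / 4 : K) : ℂ) = s) :
    |(Algebra.norm ℚ g : ℝ)| * s ^ 2 ≤ ‖(g : ℂ)‖ ^ 2 * |(Algebra.norm ℚ (b / 4) : ℝ)| := by
  have hne : algebraMap K ℂ ≠ (starRingEnd ℂ).comp (algebraMap K ℂ) := fun h =>
    hg (Complex.conj_eq_iff_im.mp (RingHom.congr_fun h g).symm)
  have := abs_norm_mul_le_of_norm_apply_le hne (hK.norm_apply_le_norm_apply_div_four hτ)
  simp only [RingHom.comp_apply, IntermediateField.algebraMap_apply, hb, Complex.conj_ofReal,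
    Complex.norm_real, Complex.norm_conj, Real.norm_of_nonneg hs] at this
  simpa only [sq] using this

theorem isTotallyReal_of_im_eq_zero (hK : K.NonRealEmbeddingsAreIdOrConj) {F : Type*} [Field F]
    [Algebra F K] [Algebra.IsAlgebraic F K] (hF : ∀ x : F, (algebraMap F K x : ℂ).im = 0) :
    IsTotallyReal F :=
  IsTotallyReal.of_isReal_comp_algebraMap fun φ =>
    ComplexEmbedding.isReal_iff_forall_im_eq_zero.mpr fun x => hK.im_apply_eq_zero φ (hF x)

theorem abs_norm_mul_sq_le_finprod (hK : K.NonRealEmbeddingsAreIdOrConj) [FiniteDimensional ℚ K]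
    {L : IntermediateField ℚ ℂ} (hLK : L ≤ K) (hL : ∀ x ∈ L, x.im = 0) {g b : K} {bL : L}
    (hbL : (bL : ℂ) = b) (hg : (g : ℂ).im ≠ 0) (hτ : ∀ τ : K →+* ℝ, -(τ b) / 4 < τ g ∧ τ g < 0)
    {s : ℝ} (hs : 0 < s) (hb : (b : ℂ) = 4 * s) {c : ℝ} (hgc : ‖(g : ℂ)‖ ≤ c) :
    |(Algebra.norm ℚ g : ℝ)| * s ^ 2 ≤
      c ^ 2 * ∏ᶠ τ : L →+* ℝ, (τ bL / 4) ^ finrank L (extendScalars hLK) := by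
  -- With this structure `finrank L K` unfolds to `finrank L (extendScalars hLK)`.
  let : Algebra L K := (inclusion hLK).toAlgebra
  have : IsScalarTower ℚ L K := .of_algebraMap_eq' rfl
  have : FiniteDimensional ℚ L := .left ℚ L K
  have : NumberField K := ⟨⟩
  have : NumberField L := ⟨⟩
  obtain rfl : algebraMap L K bL = b := Subtype.ext hbL
  have : IsTotallyReal L := hK.isTotallyReal_of_im_eq_zero fun x => hL _ x.2
  have hbL_pos : ∀ τ : L →+* ℝ, 0 < τ bL := pos_of_forall_re_pos_algebraMap (K := K) <|
    hK.re_apply_pos (by rw [hb]; simpa using hs) fun τ => by linarith [hτ τ]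
  have hnorm := ratCast_norm_algebraMap_eq_finprod (K := K) (bL / 4)
  rw [map_div₀, map_ofNat] at hnorm
  have hP : 0 ≤ ∏ᶠ τ : L →+* ℝ, τ (bL / 4) ^ finrank L K :=
    finprod_nonneg fun τ => by have := hbL_pos τ; rw [map_div₀, map_ofNat]; positivity
  have hb_div : ((algebraMap L K bL / 4 : K) : ℂ) = s := by
    rw [← IntermediateField.algebraMap_apply, map_div₀, map_ofNat,
      IntermediateField.algebraMap_apply, hb]
    ring
  have := hK.abs_norm_mul_sq_le hg hτ hs.le hb_div
  rw [hnorm, abs_of_nonneg hP] at this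
  simp only [map_div₀, map_ofNat] at this hP
  exact this.trans (mul_le_mul_of_nonneg_right (by gcongr) hP)

end IntermediateField.NonRealEmbeddingsAreIdOrConj

/-- norm bounds for the parameter γ of a candidate arithmetic group. -/
theorem stmt_7 (p q : ℕ) (hp : 3 ≤ p) (hq : 3 ≤ q) (r : ℕ)
    (γ : ℂ) (hγnotreal : γ.im ≠ 0) (hγint : IsIntegral ℤ γ)
    (L K : IntermediateField ℚ ℂ)
    (hL : L = IntermediateField.adjoin ℚ
      {((Real.cos (2 * π / p) : ℝ) : ℂ), ((Real.cos (2 * π / q) : ℝ) : ℂ)})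
    (hK : K = IntermediateField.adjoin ℚ {γ})
    (hγK : γ ∈ K)
    (hLK : L ≤ K)
    (hr : Module.finrank ↥L ↥(IntermediateField.extendScalars hLK) = r)
    (hembs : ∀ φ : ↥K →+* ℂ, φ ≠ algebraMap ↥K ℂ →
      φ ≠ (starRingEnd ℂ).comp (algebraMap ↥K ℂ) → ∀ x : ↥K, (φ x).im = 0)
    (hbound : ‖γ‖ ≤ 4 * (Real.cos (π / p) + Real.cos (π / q)) ^ 2)
    (b : ↥K) (hb : (b : ℂ) = ((16 * Real.sin (π / p) ^ 2 * Real.sin (π / q) ^ 2 : ℝ) : ℂ))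
    (bL : ↥L) (hbL : (bL : ℂ) = ((16 * Real.sin (π / p) ^ 2 * Real.sin (π / q) ^ 2 : ℝ) : ℂ))
    (hτ : ∀ τ : ↥K →+* ℝ, -(τ b) / 4 < τ ⟨γ, hγK⟩ ∧ τ ⟨γ, hγK⟩ < 0) :
    1 ≤ |Algebra.norm ℚ (⟨γ, hγK⟩ : ↥K)| ∧
    ((|Algebra.norm ℚ (⟨γ, hγK⟩ : ↥K)| : ℚ) : ℝ) ≤
      16 * (Real.cos (π / p) + Real.cos (π / q)) ^ 4 *
        (4 * Real.sin (π / p) ^ 2 * Real.sin (π / q) ^ 2)⁻¹ ^ 2 *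
        ∏ᶠ σ : (↥L →+* ℝ), (σ bL / 4) ^ r := by
  have : FiniteDimensional ℚ K := hK ▸ IntermediateField.adjoin.finiteDimensional hγint.tower_top
  refine ⟨one_le_abs_norm_of_isIntegral ?_ ?_, ?_⟩
  · exact (isIntegral_algebraMap_iff (algebraMap K ℂ).injective).mp hγint
  · exact fun h => hγnotreal (by rw [show γ = 0 from congrArg Subtype.val h, Complex.zero_im])
  have hL_real (x : ℂ) (hx : x ∈ L) : x.im = 0 := IntermediateField.im_eq_zero_of_mem_adjoin
    (by rintro z (rfl | rfl) <;> exact Complex.ofReal_im _) (hL.le hx)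
  set s := 4 * Real.sin (π / p) ^ 2 * Real.sin (π / q) ^ 2 with hs_def
  have hs : 0 < s := by
    have := Real.sin_pi_div_natCast_pos (by omega : 1 < p)
    have := Real.sin_pi_div_natCast_pos (by omega : 1 < q)
    positivity
  have hcore := IntermediateField.NonRealEmbeddingsAreIdOrConj.abs_norm_mul_sq_le_finprod hembs
    hLK hL_real (hbL.trans hb.symm) hγnotreal hτ hs (by rw [hb, hs_def]; push_cast; ring) hbound
  rw [hr] at hcore
  set C := Real.cos (π / p) + Real.cos (π / q)
  set P := ∏ᶠ τ : L →+* ℝ, (τ bL / 4) ^ r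
  rw [Rat.cast_abs]
  calc _ = |(Algebra.norm ℚ (⟨γ, hγK⟩ : K) : ℝ)| * s ^ 2 / s ^ 2 := by field_simp
    _ ≤ (4 * C ^ 2) ^ 2 * P / s ^ 2 := div_le_div_of_nonneg_right hcore (sq_nonneg s)
    _ = 16 * C ^ 4 * s⁻¹ ^ 2 * P := by ring
end
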